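/- The map f : [1/3, 2] → [1/3, 2] with f(x) = 2x for x ∈ [1/3, 1] and f(x) = x/3 for x ∈ (1, 2] has dense orbits: for every x ∈ [1/3, 2], the set {f^n(x) : n ∈ ℕ} is dense in [1/3, 2]. -/
import Mathlib


noncomputable def kariMap (x : ℝ) : ℝ := if x ≤ 1 then 2 * x else x / 3

open Set

section Aux

local instance factLog6 : Fact (0 < Real.log 6) := ⟨Real.log_pos (by norm_num)⟩

private lemma kari_mem {y : ℝ} (hy : y ∈ Set.Icc (1/3 : ℝ) 2) :
    kariMap y ∈ Set.Icc (1/3 : ℝ) 2 := by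
  rcases hy with ⟨h1, h2⟩
  unfold kariMap
  split_ifs with h
  · exact ⟨by linarith, by linarith⟩
  · exact ⟨by linarith, by linarith⟩

private lemma kari_iter_mem {x : ℝ} (hx : x ∈ Set.Icc (1/3 : ℝ) 2) (n : ℕ) :
    kariMap^[n] x ∈ Set.Icc (1/3 : ℝ) 2 := by
  induction n with
  | zero => simpa using hx
  | succ n ih => rw [Function.iterate_succ_apply']; exact kari_mem ih

private lemma log6_eq : Real.log 6 = Real.log 2 + Real.log 3 := by
  rw [show (6:ℝ) = 2 * 3 by norm_num, Real.log_mul (by norm_num) (by norm_num)]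

private lemma kari_log_step {y : ℝ} (hy : y ∈ Set.Icc (1/3 : ℝ) 2) :
    ((Real.log (kariMap y) : ℝ) : AddCircle (Real.log 6))
      = ((Real.log y + Real.log 2 : ℝ) : AddCircle (Real.log 6)) := by
  have hy0 : (0:ℝ) < y := lt_of_lt_of_le (by norm_num) hy.1
  unfold kariMap
  split_ifs with h
  · rw [Real.log_mul (by norm_num) hy0.ne', add_comm]
  · have hlog : Real.log (y / 3) = (Real.log y + Real.log 2) - Real.log 6 := by
      rw [Real.log_div hy0.ne' (by norm_num), log6_eq]; ring
    rw [hlog]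
    have h' := AddCircle.coe_add_period (Real.log 6)
      (Real.log y + Real.log 2 - Real.log 6)
    rw [sub_add_cancel] at h'
    exact h'.symm

private lemma kari_log_iter {x : ℝ} (hx : x ∈ Set.Icc (1/3 : ℝ) 2) (n : ℕ) :
    ((Real.log (kariMap^[n] x) : ℝ) : AddCircle (Real.log 6))
      = ((Real.log x + n * Real.log 2 : ℝ) : AddCircle (Real.log 6)) := by
  induction n with
  | zero => simp
  | succ n ih =>
      rw [Function.iterate_succ_apply', kari_log_step (kari_iter_mem hx n)]
      have h1 : ((Real.log (kariMap^[n] x) + Real.log 2 : ℝ) : AddCircle (Real.log 6))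
          = ((Real.log (kariMap^[n] x) : ℝ) : AddCircle (Real.log 6))
            + ((Real.log 2 : ℝ) : AddCircle (Real.log 6)) := by
        rw [AddCircle.coe_add]
      rw [h1, ih]
      have h2 : ((Real.log x + (n+1 : ℕ) * Real.log 2 : ℝ) : AddCircle (Real.log 6))
          = ((Real.log x + n * Real.log 2 : ℝ) : AddCircle (Real.log 6))
            + ((Real.log 2 : ℝ) : AddCircle (Real.log 6)) := by
        push_cast
        rw [← AddCircle.coe_add]
        ring_nf
      rw [h2]

private lemma dense_zmult :
    Dense ((AddSubgroup.zmultiples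
      ((Real.log 2 : ℝ) : AddCircle (Real.log 6))) : Set (AddCircle (Real.log 6))) := by
  have h2 : (0:ℝ) < Real.log 2 := Real.log_pos (by norm_num)
  have h6 : (0:ℝ) < Real.log 6 := Real.log_pos (by norm_num)
  -- the subgroup of ℝ generated by log 2 and log 6 is dense
  have hS : Dense ((AddSubgroup.closure {Real.log 2, Real.log 6} : AddSubgroup ℝ) : Set ℝ) := by
    rcases AddSubgroup.dense_or_cyclic
        (AddSubgroup.closure {Real.log 2, Real.log 6}) with h | ⟨g, hg⟩
    · exact h
    · exfalso
      have m2 : Real.log 2 ∈ AddSubgroup.closure ({Real.log 2, Real.log 6} : Set ℝ) :=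
        AddSubgroup.subset_closure (by simp)
      have m6 : Real.log 6 ∈ AddSubgroup.closure ({Real.log 2, Real.log 6} : Set ℝ) :=
        AddSubgroup.subset_closure (by simp)
      rw [hg, AddSubgroup.mem_closure_singleton] at m2 m6
      obtain ⟨s, hs⟩ := m2
      obtain ⟨t, ht⟩ := m6
      have key : (t:ℝ) * Real.log 2 = (s:ℝ) * Real.log 6 := by
        rw [← hs, ← ht]
        push_cast [zsmul_eq_mul]
        ring
      have habs : (t.natAbs : ℝ) * Real.log 2 = (s.natAbs : ℝ) * Real.log 6 := by
        have := congrArg abs key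
        rw [abs_mul, abs_mul, abs_of_pos h2, abs_of_pos h6] at this
        rw [Nat.cast_natAbs, Nat.cast_natAbs, Int.cast_abs, Int.cast_abs]
        exact this
      have ht0 : t.natAbs ≠ 0 := by
        intro h0
        rw [Int.natAbs_eq_zero] at h0
        rw [h0, zero_zsmul] at ht
        exact h6.ne ht
      have hs0 : s.natAbs ≠ 0 := by
        intro h0
        rw [h0, Nat.cast_zero, zero_mul, mul_eq_zero] at habs
        rcases habs with h' | h'
        · exact ht0 (by exact_mod_cast h')
        · exact h2.ne' h'
      have hpow : (2:ℝ) ^ t.natAbs = 6 ^ s.natAbs := by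
        have hlogeq : Real.log ((2:ℝ) ^ t.natAbs) = Real.log ((6:ℝ) ^ s.natAbs) := by
          rw [Real.log_pow, Real.log_pow]
          exact_mod_cast habs
        exact Real.log_injOn_pos (Set.mem_Ioi.2 (by positivity))
          (Set.mem_Ioi.2 (by positivity)) hlogeq
      have hnat : (2:ℕ) ^ t.natAbs = 6 ^ s.natAbs := by exact_mod_cast hpow
      have h3 : (3:ℕ) ∣ 2 ^ t.natAbs := by
        rw [hnat]
        exact dvd_pow (by norm_num) hs0
      have := Nat.Prime.dvd_of_dvd_pow (p := 3) (by norm_num) h3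
      norm_num at this
  -- push it to the circle
  have hsurj : Function.Surjective
      (QuotientAddGroup.mk' (AddSubgroup.zmultiples (Real.log 6))) :=
    QuotientAddGroup.mk'_surjective _
  have hdImg : Dense ((QuotientAddGroup.mk' (AddSubgroup.zmultiples (Real.log 6))) ''
      ((AddSubgroup.closure {Real.log 2, Real.log 6} : AddSubgroup ℝ) : Set ℝ)) :=
    (hsurj.denseRange).dense_image (AddCircle.continuous_mk' _) hS
  refine hdImg.mono ?_
  have hmap : (AddSubgroup.closure ({Real.log 2, Real.log 6} : Set ℝ)).map
      (QuotientAddGroup.mk' (AddSubgroup.zmultiples (Real.log 6)))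
      ≤ AddSubgroup.zmultiples ((Real.log 2 : ℝ) : AddCircle (Real.log 6)) := by
    rw [AddMonoidHom.map_closure, AddSubgroup.closure_le]
    rw [Set.image_insert_eq, Set.image_singleton]
    rintro q hq
    rcases hq with rfl | hq
    · exact AddSubgroup.mem_zmultiples _
    · rw [Set.mem_singleton_iff] at hq
      subst hq
      have : (QuotientAddGroup.mk' (AddSubgroup.zmultiples (Real.log 6))) (Real.log 6)
          = 0 := by
        rw [QuotientAddGroup.mk'_apply]
        exact AddCircle.coe_period _
      rw [this]
      exact zero_mem _
  intro q hq
  rcases hq with ⟨r, hr, rfl⟩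
  exact hmap (AddSubgroup.mem_map.2 ⟨r, hr, rfl⟩)

private lemma dense_orbit_circle (c : AddCircle (Real.log 6)) :
    Dense (Set.range fun n : ℕ =>
      c + n • ((Real.log 2 : ℝ) : AddCircle (Real.log 6))) := by
  set a : AddCircle (Real.log 6) := ((Real.log 2 : ℝ) : AddCircle (Real.log 6)) with ha
  have h1 : Dense (Set.range fun m : ℤ => m • a) := by
    have : Set.range (fun m : ℤ => m • a)
        = ((AddSubgroup.zmultiples a) : Set (AddCircle (Real.log 6))) := by
      ext q
      simp [AddSubgroup.mem_zmultiples_iff, Set.mem_range]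
    rw [this]
    exact dense_zmult
  have h2 : Dense (Set.range fun n : ℕ => n • a) := by
    rw [dense_iff_closure_eq] at h1 ⊢
    rw [← closure_range_zsmul_eq_nsmul]
    exact h1
  have h3 : (Set.range fun n : ℕ => c + n • a) = (c + ·) '' (Set.range fun n : ℕ => n • a) := by
    rw [← Set.range_comp]
    rfl
  rw [h3]
  exact ((Homeomorph.addLeft c).surjective.denseRange).dense_image
    (Homeomorph.continuous _) h2

theorem kariMap_orbits_dense (x : ℝ) (hx : x ∈ Set.Icc (1/3 : ℝ) 2) :
    Set.Icc (1/3 : ℝ) 2 ⊆ closure {y : ℝ | ∃ n : ℕ, kariMap^[n] x = y} := by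
  have key : Set.Ioo (1/3 : ℝ) 2 ⊆ closure {y : ℝ | ∃ n : ℕ, kariMap^[n] x = y} := by
    intro z hz
    rw [Metric.mem_closure_iff]
    intro ε hε
    set δ : ℝ := min ε (min (z - 1/3) (2 - z)) with hδdef
    have hδ : 0 < δ := lt_min hε (lt_min (by linarith [hz.1]) (by linarith [hz.2]))
    have hδε : δ ≤ ε := min_le_left _ _
    have hlow : (1/3:ℝ) ≤ z - δ := by
      have : δ ≤ z - 1/3 := le_trans (min_le_right _ _) (min_le_left _ _)
      linarith
    have hhigh : z + δ ≤ 2 := by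
      have : δ ≤ 2 - z := le_trans (min_le_right _ _) (min_le_right _ _)
      linarith
    have hzl : (0:ℝ) < z - δ := by linarith
    have hz0 : (0:ℝ) < z := by linarith [hz.1]
    -- the open set in the circle
    set U : Set (AddCircle (Real.log 6)) :=
      (fun r : ℝ => (r : AddCircle (Real.log 6))) ''
        Set.Ioo (Real.log (z - δ)) (Real.log (z + δ)) with hU
    have hUopen : IsOpen U := QuotientAddGroup.isOpenMap_coe _ isOpen_Ioo
    have hUne : U.Nonempty :=
      ⟨(Real.log z : AddCircle (Real.log 6)),
        ⟨Real.log z, ⟨Real.log_lt_log hzl (by linarith), Real.log_lt_log hz0 (by linarith)⟩,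
          rfl⟩⟩
    obtain ⟨q, ⟨n, rfl⟩, hqU⟩ :=
      (dense_orbit_circle ((Real.log x : ℝ) : AddCircle (Real.log 6))).exists_mem_open
        hUopen hUne
    obtain ⟨w, hw, hwq⟩ := hqU
    set W := kariMap^[n] x with hWdef
    have hWmem : W ∈ Set.Icc (1/3 : ℝ) 2 := kari_iter_mem hx n
    have hWpos : (0:ℝ) < W := lt_of_lt_of_le (by norm_num) hWmem.1
    have hwq' : (w : AddCircle (Real.log 6))
        = ((Real.log x : ℝ) : AddCircle (Real.log 6))
          + n • ((Real.log 2 : ℝ) : AddCircle (Real.log 6)) := hwq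
    have hWc : ((Real.log W : ℝ) : AddCircle (Real.log 6)) = (w : AddCircle (Real.log 6)) := by
      rw [hWdef, kari_log_iter hx n, hwq', AddCircle.coe_add,
        show (n : ℝ) * Real.log 2 = n • Real.log 2 by simp [nsmul_eq_mul],
        AddCircle.coe_nsmul]
    -- representatives in Ico (log (1/3)) (log (1/3) + log 6)
    have hp : Real.log (1/3 : ℝ) + Real.log 6 = Real.log 2 := by
      rw [← Real.log_mul (by norm_num) (by norm_num)]
      norm_num
    have hloglow : Real.log (1/3 : ℝ) ≤ Real.log (z - δ) :=
      Real.log_le_log (by norm_num) hlow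
    have hloghigh : Real.log (z + δ) ≤ Real.log 2 :=
      Real.log_le_log (by linarith) hhigh
    have hw_Ico : w ∈ Set.Ico (Real.log (1/3 : ℝ)) (Real.log (1/3 : ℝ) + Real.log 6) := by
      rw [hp]
      exact ⟨le_trans hloglow hw.1.le, lt_of_lt_of_le hw.2 hloghigh⟩
    by_cases hW2 : W = 2
    · exfalso
      have hcoe13 : ((Real.log (1/3 : ℝ) : ℝ) : AddCircle (Real.log 6))
          = (w : AddCircle (Real.log 6)) := by
        rw [← hWc, hW2]
        have := AddCircle.coe_add_period (Real.log 6) (Real.log (1/3 : ℝ))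
        rw [hp] at this
        exact this.symm
      have h13Ico : Real.log (1/3 : ℝ)
          ∈ Set.Ico (Real.log (1/3 : ℝ)) (Real.log (1/3 : ℝ) + Real.log 6) :=
        ⟨le_refl _, by linarith [factLog6.out]⟩
      have heq := (AddCircle.coe_eq_coe_iff_of_mem_Ico h13Ico hw_Ico).1 hcoe13
      have : Real.log (1/3 : ℝ) < w := lt_of_le_of_lt hloglow hw.1
      exact this.ne heq
    · have hWlt : Real.log W < Real.log 2 := by
        rcases lt_or_eq_of_le hWmem.2 with h | h
        · exact Real.log_lt_log hWpos h
        · exact absurd h hW2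
      have hW_Ico : Real.log W
          ∈ Set.Ico (Real.log (1/3 : ℝ)) (Real.log (1/3 : ℝ) + Real.log 6) := by
        rw [hp]
        exact ⟨Real.log_le_log (by norm_num) hWmem.1, hWlt⟩
      have hWw : Real.log W = w := (AddCircle.coe_eq_coe_iff_of_mem_Ico hW_Ico hw_Ico).1 hWc
      have h1 : z - δ < W := (Real.log_lt_log_iff hzl hWpos).1 (hWw ▸ hw.1)
      have h2 : W < z + δ := (Real.log_lt_log_iff hWpos (by linarith)).1 (hWw ▸ hw.2)
      refine ⟨W, ⟨n, rfl⟩, ?_⟩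
      rw [Real.dist_eq, abs_sub_lt_iff]
      constructor <;> linarith
  intro z hz
  have hIcc : Set.Icc (1/3 : ℝ) 2 = closure (Set.Ioo (1/3 : ℝ) 2) :=
    (closure_Ioo (by norm_num : (1/3 : ℝ) ≠ 2)).symm
  rw [hIcc] at hz
  exact closure_minimal key isClosed_closure hz

end Aux
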